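/- (Binet–Fibonacci binomial formula) If y x = φ x y in an algebra over the reals, where φ is the golden ratio, then (x+y)(x - φ^{-1} y)(x + φ^{-2} y)···(x + (-1/φ)^{n-1} y) = sum_{k=0}^n (F_n!/(F_k! F_{n-k}!)) (-1/φ)^{k(k-1)/2} x^{n-k} y^k, where F_m are Fibonacci numbers. -/

import Mathlib

/-- The Fibonacci factorial `F_n! = F_1 F_2 ⋯ F_n` (as a real number). -/
noncomputable def fibFac : ℕ → ℝ
  | 0 => 1
  | n + 1 => fibFac n * (Nat.fib (n + 1) : ℝ)

/-- The ordered q-binomial power `(x+y)^n_{<q} = (x+y)(x+qy)⋯(x+q^{n-1}y)`. -/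
def ascBinom {A : Type*} [Ring A] [Algebra ℝ A] (x y : A) (q : ℝ) : ℕ → A
  | 0 => 1
  | n + 1 => ascBinom x y q n * (x + q ^ n • y)

/-!
Expanding `(x+y)^{n+1}_{<q} = (x+y)^n_{<q} (x + qⁿ y)` and moving `x` to the left through `yᵏ`
with `yᵏ x = pᵏ x yᵏ` shows that the coefficients satisfy a `(p,q)`-Pascal rule. For `p = φ`,
`q = ψ = -1/φ`, Binet's formula gives `F_{k+m} = φᵏ F_m + ψᵐ F_k`, which is exactly the
rule obeyed by the Fibonomial coefficients times `ψ^(k choose 2)`.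
-/

open Finset Real

/-- The coefficient of `x^(n-k) y^k` in `(x+y)^n_{<q}` when `y x = p x y`: the `(p,q)`-binomial
coefficient times `q^(k choose 2)`. -/
noncomputable def orderedBinomCoeff (p q : ℝ) : ℕ → ℕ → ℝ
  | _, 0 => 1
  | 0, _ + 1 => 0
  | n + 1, k + 1 =>
    p ^ (k + 1) * orderedBinomCoeff p q n (k + 1) + q ^ n * orderedBinomCoeff p q n k

namespace orderedBinomCoeff

variable (p q : ℝ)

@[simp]
theorem zero_right (n : ℕ) : orderedBinomCoeff p q n 0 = 1 := by
  cases n <;> rfl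

theorem succ_succ (n k : ℕ) :
    orderedBinomCoeff p q (n + 1) (k + 1)
      = p ^ (k + 1) * orderedBinomCoeff p q n (k + 1) + q ^ n * orderedBinomCoeff p q n k :=
  rfl

theorem eq_zero_of_lt : ∀ {n k : ℕ}, n < k → orderedBinomCoeff p q n k = 0
  | 0, _ + 1, _ => rfl
  | n + 1, k + 1, h => by
    rw [succ_succ, eq_zero_of_lt (by omega), eq_zero_of_lt (by omega), mul_zero, mul_zero, add_zero]

theorem self : ∀ n : ℕ, orderedBinomCoeff p q n n = q ^ n.choose 2
  | 0 => rfl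
  | n + 1 => by
    rw [succ_succ, eq_zero_of_lt p q n.lt_succ_self, self n, Nat.choose_succ_succ',
      Nat.choose_one_right, pow_add]
    ring

end orderedBinomCoeff

theorem pow_mul_of_mul_eq_smul {R A : Type*} [CommSemiring R] [Semiring A] [Algebra R A]
    {p : R} {x y : A}
    (hyx : y * x = p • (x * y)) (k : ℕ) : y ^ k * x = p ^ k • (x * y ^ k) := by
  induction k with
  | zero => simp
  | succ k ih =>
    rw [pow_succ, mul_assoc, hyx, mul_smul_comm, ← mul_assoc, ih, smul_mul_assoc, smul_smul,
      mul_assoc, ← pow_succ, pow_succ' p]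

theorem ascBinom_eq_sum {A : Type*} [Ring A] [Algebra ℝ A] {p : ℝ} (q : ℝ) {x y : A}
    (hyx : y * x = p • (x * y)) (n : ℕ) :
    ascBinom x y q n
      = ∑ k ∈ range (n + 1), orderedBinomCoeff p q n k • (x ^ (n - k) * y ^ k) := by
  induction n with
  | zero => simp [ascBinom]
  | succ n ih =>
    set c := orderedBinomCoeff p q
    have hx : ∀ k ∈ range (n + 1),
        c n k • (x ^ (n - k) * y ^ k) * x = (p ^ k * c n k) • (x ^ (n + 1 - k) * y ^ k) := by
      intro k hk
      rw [smul_mul_assoc, mul_assoc, pow_mul_of_mul_eq_smul hyx, mul_smul_comm, ← mul_assoc,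
        ← pow_succ, smul_smul, mul_comm, Nat.sub_add_comm (mem_range_succ_iff.mp hk)]
    have hy : ∀ k ∈ range (n + 1),
        c n k • (x ^ (n - k) * y ^ k) * (q ^ n • y)
          = (q ^ n * c n k) • (x ^ (n - k) * y ^ (k + 1)) := by
      intro k _
      rw [smul_mul_assoc, mul_smul_comm, smul_smul, mul_comm (c n k), mul_assoc, ← pow_succ]
    have hshift : ∑ k ∈ range (n + 1), (p ^ k * c n k) • (x ^ (n + 1 - k) * y ^ k)
        = ∑ k ∈ range (n + 1), (p ^ (k + 1) * c n (k + 1)) • (x ^ (n - k) * y ^ (k + 1))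
          + x ^ (n + 1) := by
      have hc : c n (n + 1) = 0 := orderedBinomCoeff.eq_zero_of_lt p q n.lt_succ_self
      rw [sum_range_succ', sum_range_succ _ n, hc]
      simp [c]
    calc ascBinom x y q (n + 1)
        = ∑ k ∈ range (n + 1), (p ^ k * c n k) • (x ^ (n + 1 - k) * y ^ k)
          + ∑ k ∈ range (n + 1), (q ^ n * c n k) • (x ^ (n - k) * y ^ (k + 1)) := by
          rw [ascBinom, ih, sum_mul, ← sum_congr rfl hx, ← sum_congr rfl hy,
            ← sum_add_distrib]
          simp only [mul_add]
      _ = ∑ k ∈ range (n + 1), (p ^ (k + 1) * c n (k + 1) + q ^ n * c n k) •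
              (x ^ (n - k) * y ^ (k + 1)) + x ^ (n + 1) := by
          simp only [hshift, add_smul, sum_add_distrib]
          abel
      _ = ∑ k ∈ range (n + 1 + 1), c (n + 1) k • (x ^ (n + 1 - k) * y ^ k) := by
          rw [sum_range_succ' _ (n + 1)]
          simp [c, orderedBinomCoeff.succ_succ]

theorem fibFac_succ (n : ℕ) : fibFac (n + 1) = fibFac n * Nat.fib (n + 1) :=
  rfl

theorem fibFac_pos : ∀ n, 0 < fibFac n
  | 0 => one_pos
  | n + 1 => mul_pos (fibFac_pos n) (by exact_mod_cast Nat.fib_pos.2 n.succ_pos)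

section GoldenRatio

open goldenRatio

theorem coe_fib_add (k m : ℕ) :
    (Nat.fib (k + m) : ℝ) = φ ^ k * Nat.fib m + ψ ^ m * Nat.fib k := by
  have h5 : (√5 : ℝ) ≠ 0 := by positivity
  rw [coe_fib_eq, coe_fib_eq, coe_fib_eq]
  field_simp
  ring

theorem orderedBinomCoeff_golden_mul_fibFac_mul_fibFac :
    ∀ k m : ℕ, orderedBinomCoeff φ ψ (k + m) k * fibFac k * fibFac m
      = fibFac (k + m) * ψ ^ k.choose 2
  | 0, m => by simp [fibFac]
  | k + 1, 0 => by simp [fibFac, orderedBinomCoeff.self, mul_comm]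
  | k + 1, m + 1 => by
    have h₁ := orderedBinomCoeff_golden_mul_fibFac_mul_fibFac (k + 1) m
    have h₂ := orderedBinomCoeff_golden_mul_fibFac_mul_fibFac k (m + 1)
    rw [show k + (m + 1) = k + 1 + m by omega] at h₂
    have hfib : (Nat.fib (k + 1 + m + 1) : ℝ)
        = φ ^ (k + 1) * Nat.fib (m + 1) + ψ ^ (m + 1) * Nat.fib (k + 1) :=
      coe_fib_add (k + 1) (m + 1)
    rw [show k + 1 + (m + 1) = k + 1 + m + 1 by omega, orderedBinomCoeff.succ_succ,
      fibFac_succ (k + 1 + m), hfib, fibFac_succ k, fibFac_succ m]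
    rw [fibFac_succ k, Nat.choose_succ_succ', Nat.choose_one_right, pow_add] at h₁
    rw [fibFac_succ m] at h₂
    rw [Nat.choose_succ_succ', Nat.choose_one_right, pow_add]
    linear_combination (φ ^ (k + 1) * Nat.fib (m + 1)) * h₁
      + (ψ ^ (k + 1 + m) * Nat.fib (k + 1)) * h₂

theorem orderedBinomCoeff_goldenRatio_goldenConj {n k : ℕ} (hk : k ≤ n) :
    orderedBinomCoeff φ ψ n k = fibFac n / (fibFac k * fibFac (n - k)) * ψ ^ k.choose 2 := by
  obtain ⟨m, rfl⟩ := Nat.exists_eq_add_of_le hk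
  have := (fibFac_pos k).ne'
  have := (fibFac_pos m).ne'
  rw [Nat.add_sub_cancel_left, div_mul_eq_mul_div,
    ← orderedBinomCoeff_golden_mul_fibFac_mul_fibFac]
  field_simp

end GoldenRatio

/-- Binet–Fibonacci binomial formula: if `y x = φ (x y)` with `φ`
    the golden ratio, then
    `(x+y)(x-φ⁻¹y)(x+φ⁻²y)⋯(x+(-1/φ)^{n-1}y)
       = ∑_{k=0}^n (F_n!/(F_k!F_{n-k}!)) (-1/φ)^{k(k-1)/2} x^{n-k} y^k`. -/
theorem binet_fibonacci_binomial {A : Type*} [Ring A] [Algebra ℝ A]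
    (φ : ℝ) (hφ : φ = (1 + Real.sqrt 5) / 2)
    (x y : A) (hyx : y * x = φ • (x * y)) (n : ℕ) :
    ascBinom x y (-1 / φ) n
      = ∑ k ∈ Finset.range (n + 1),
          (fibFac n / (fibFac k * fibFac (n - k)) * (-1 / φ) ^ (k * (k - 1) / 2)) •
            (x ^ (n - k) * y ^ k) := by
  obtain rfl : φ = goldenRatio := hφ
  have hψ : -1 / goldenRatio = goldenConj := by
    rw [neg_div, one_div, inv_goldenRatio, neg_neg]
  rw [hψ, ascBinom_eq_sum _ hyx]
  refine sum_congr rfl fun k hk => ?_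
  rw [orderedBinomCoeff_goldenRatio_goldenConj (mem_range_succ_iff.mp hk), Nat.choose_two_right]
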